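/- In any reachable CCSK process, each key occurs at most twice, and if a key occurs twice then it is attached to complementary labels λ[k] and λ̄[k]. -/

import Mathlib

namespace CCSK

/-- Labels: names, co-names, and the silent action τ. -/
inductive Lab : Type
  | name : ℕ → Lab
  | coname : ℕ → Lab
  | tau : Lab
deriving DecidableEq

/-- Complement of a label. -/
def Lab.co : Lab → Lab
  | .name n => .coname n
  | .coname n => .name n
  | .tau => .tau

abbrev Key := ℕ

/-- CCSK processes (with a replication operator for the extended calculus). -/
inductive Proc : Type
  | nil : Proc
  | pre : Lab → Proc → Proc          -- α.X
  | kpre : Lab → Key → Proc → Proc   -- α[k].X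
  | par : Proc → Proc → Proc
  | sum : Proc → Proc → Proc
  | res : Proc → ℕ → Proc            -- X \ a
  | repl : Proc → Proc               -- !X
deriving DecidableEq

/-- Keys occurring in a process. -/
def Proc.keys : Proc → Set Key
  | .nil => ∅
  | .pre _ X => X.keys
  | .kpre _ k X => insert k X.keys
  | .par X Y => X.keys ∪ Y.keys
  | .sum X Y => X.keys ∪ Y.keys
  | .res X _ => X.keys
  | .repl X => X.keys

/-- A process is standard when it contains no keys. -/
def Proc.std (X : Proc) : Prop := X.keys = ∅

/-- Multiset of keyed-prefix occurrences (label, key). -/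
def Proc.keyed : Proc → Multiset (Lab × Key)
  | .nil => 0
  | .pre _ X => X.keyed
  | .kpre a k X => (a, k) ::ₘ X.keyed
  | .par X Y => X.keyed + Y.keyed
  | .sum X Y => X.keyed + Y.keyed
  | .res X _ => X.keyed
  | .repl X => X.keyed

/-- Enhanced keyed labels. -/
inductive ELab : Type
  | base : Lab → Key → ELab          -- α[k]
  | parL : ELab → ELab               -- |_L θ
  | parR : ELab → ELab               -- |_R θ
  | bang : ELab → ELab               -- !θ (replication)
  | syn : ELab → ELab → ELab         -- ⟨θ_L, θ_R⟩
deriving DecidableEq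

/-- Underlying action label ℓ(θ). -/
def ELab.act : ELab → Lab
  | .base a _ => a
  | .parL θ => θ.act
  | .parR θ => θ.act
  | .bang θ => θ.act
  | .syn _ _ => .tau

/-- Key of an enhanced keyed label. -/
def ELab.key : ELab → Key
  | .base _ k => k
  | .parL θ => θ.key
  | .parR θ => θ.key
  | .bang θ => θ.key
  | .syn θ _ => θ.key

/-- Dependency relation ⋖ on enhanced keyed labels (including the extension
for replication labels). -/
inductive Dep : ELab → ELab → Prop
  | base (a : Lab) (k : Key) (θ : ELab) : Dep (.base a k) θ
  | parL {θ θ'} : Dep θ θ' → Dep (.parL θ) (.parL θ')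
  | parR {θ θ'} : Dep θ θ' → Dep (.parR θ) (.parR θ')
  | synSrcL {θL θR θ} : Dep θL θ → Dep (.syn θL θR) θ
  | synSrcR {θL θR θ} : Dep θR θ → Dep (.syn θL θR) θ
  | synTgtL {θ θL θR} : Dep θ θL → Dep θ (.syn θL θR)
  | synTgtR {θ θL θR} : Dep θ θR → Dep θ (.syn θL θR)
  | synSynL {θL θR θL' θR'} : Dep θL θL' → Dep (.syn θL θR) (.syn θL' θR')
  | synSynR {θL θR θL' θR'} : Dep θR θR' → Dep (.syn θL θR) (.syn θL' θR')
  | bangBang (θ : ELab) : Dep (.bang θ) (.bang θ)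
  | bangParL (θ θ' : ELab) : Dep (.bang θ) (.parL θ')
  | bangParRSynL (θL θR θ'' : ELab) : Dep (.bang (.syn θL θR)) (.parR (.parL θ''))
  | bangParRSynR (θL θR θ'' : ELab) : Dep (.bang (.syn θL θR)) (.parR (.parR θ''))
  | bangParR {θ θ' : ELab} : Dep θ θ' → Dep (.bang θ) (.parR θ')

/-- Concurrency of labels: no dependency in either direction. -/
def Conc (θ₁ θ₂ : ELab) : Prop := ¬ Dep θ₁ θ₂ ∧ ¬ Dep θ₂ θ₁

/-- The proved forward LTS for CCSK (without replication rules). -/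
inductive Fwd : Proc → ELab → Proc → Prop
  | act {a k X} : Proc.std X → Fwd (.pre a X) (.base a k) (.kpre a k X)
  | pre {a : Lab} {k : Key} {X X' : Proc} {θ : ELab} : Fwd X θ X' → θ.key ≠ k →
      Fwd (.kpre a k X) θ (.kpre a k X')
  | res {X X' : Proc} {θ : ELab} {a : ℕ} : Fwd X θ X' → θ.act ≠ .name a → θ.act ≠ .coname a →
      Fwd (X.res a) θ (X'.res a)
  | parL {X X' Y : Proc} {θ : ELab} : Fwd X θ X' → θ.key ∉ Y.keys →
      Fwd (X.par Y) (.parL θ) (X'.par Y)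
  | parR {Y Y' X : Proc} {θ : ELab} : Fwd Y θ Y' → θ.key ∉ X.keys →
      Fwd (X.par Y) (.parR θ) (X.par Y')
  | syn {X X' Y Y' : Proc} {θ₁ θ₂ : ELab} : Fwd X θ₁ X' → Fwd Y θ₂ Y' →
      θ₁.act ≠ .tau → θ₂.act = θ₁.act.co → θ₂.key = θ₁.key →
      Fwd (X.par Y) (.syn (.parL θ₁) (.parR θ₂)) (X'.par Y')
  | sumL {X θ X' Y} : Fwd X θ X' → Proc.std Y → Fwd (X.sum Y) θ (X'.sum Y)
  | sumR {Y θ Y' X} : Fwd Y θ Y' → Proc.std X → Fwd (X.sum Y) θ (X.sum Y')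

/-- The proved backward LTS for CCSK (exact symmetric of the forward one).
`Bwd X θ Y` means `X ⇝[θ] Y`. -/
inductive Bwd : Proc → ELab → Proc → Prop
  | act {a k X} : Proc.std X → Bwd (.kpre a k X) (.base a k) (.pre a X)
  | pre {a : Lab} {k : Key} {X' X : Proc} {θ : ELab} : Bwd X' θ X → θ.key ≠ k →
      Bwd (.kpre a k X') θ (.kpre a k X)
  | res {X' X : Proc} {θ : ELab} {a : ℕ} : Bwd X' θ X → θ.act ≠ .name a → θ.act ≠ .coname a →
      Bwd (X'.res a) θ (X.res a)
  | parL {X' X Y : Proc} {θ : ELab} : Bwd X' θ X → θ.key ∉ Y.keys →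
      Bwd (X'.par Y) (.parL θ) (X.par Y)
  | parR {Y' Y X : Proc} {θ : ELab} : Bwd Y' θ Y → θ.key ∉ X.keys →
      Bwd (X.par Y') (.parR θ) (X.par Y)
  | syn {X' X Y' Y : Proc} {θ₁ θ₂ : ELab} : Bwd X' θ₁ X → Bwd Y' θ₂ Y →
      θ₁.act ≠ .tau → θ₂.act = θ₁.act.co → θ₂.key = θ₁.key →
      Bwd (X'.par Y') (.syn (.parL θ₁) (.parR θ₂)) (X.par Y)
  | sumL {X' θ X Y} : Bwd X' θ X → Proc.std Y → Bwd (X'.sum Y) θ (X.sum Y)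
  | sumR {Y' θ Y X} : Bwd Y' θ Y → Proc.std X → Bwd (X.sum Y') θ (X.sum Y)

/-- Combined LTS: `Step true` is forward, `Step false` is backward. -/
def Step : Bool → Proc → ELab → Proc → Prop
  | true => Fwd
  | false => Bwd

/-- Reachability: connected to a standard process by forward/backward moves. -/
def Reachable (X : Proc) : Prop :=
  ∃ X₀ : Proc, X₀.std ∧
    Relation.ReflTransGen (fun A B => ∃ d θ, Step d A θ B) X₀ X

/-- The proved forward LTS for CCSK extended with replication. -/
inductive FwdR : Proc → ELab → Proc → Prop
  | act {a k X} : Proc.std X → FwdR (.pre a X) (.base a k) (.kpre a k X)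
  | pre {a : Lab} {k : Key} {X X' : Proc} {θ : ELab} : FwdR X θ X' → θ.key ≠ k →
      FwdR (.kpre a k X) θ (.kpre a k X')
  | res {X X' : Proc} {θ : ELab} {a : ℕ} : FwdR X θ X' → θ.act ≠ .name a → θ.act ≠ .coname a →
      FwdR (X.res a) θ (X'.res a)
  | parL {X X' Y : Proc} {θ : ELab} : FwdR X θ X' → θ.key ∉ Y.keys →
      FwdR (X.par Y) (.parL θ) (X'.par Y)
  | parR {Y Y' X : Proc} {θ : ELab} : FwdR Y θ Y' → θ.key ∉ X.keys →
      FwdR (X.par Y) (.parR θ) (X.par Y')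
  | syn {X X' Y Y' : Proc} {θ₁ θ₂ : ELab} : FwdR X θ₁ X' → FwdR Y θ₂ Y' →
      θ₁.act ≠ .tau → θ₂.act = θ₁.act.co → θ₂.key = θ₁.key →
      FwdR (X.par Y) (.syn (.parL θ₁) (.parR θ₂)) (X'.par Y')
  | sumL {X θ X' Y} : FwdR X θ X' → Proc.std Y → FwdR (X.sum Y) θ (X'.sum Y)
  | sumR {Y θ Y' X} : FwdR Y θ Y' → Proc.std X → FwdR (X.sum Y) θ (X.sum Y')
  | repl1 {X X' : Proc} {θ : ELab} : FwdR X θ X' →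
      FwdR (.repl X) (.bang θ) ((Proc.repl X).par X')
  | repl2 {X X' X'' : Proc} {θ₁ θ₂ : ELab} : FwdR X θ₁ X' → FwdR X θ₂ X'' →
      θ₁.act ≠ .tau → θ₂.act = θ₁.act.co → θ₂.key = θ₁.key →
      FwdR (.repl X) (.bang (.syn (.parL θ₁) (.parR θ₂)))
        ((Proc.repl X).par (X'.par X''))

/-- The proved backward LTS for CCSK extended with replication. -/
inductive BwdR : Proc → ELab → Proc → Prop
  | act {a k X} : Proc.std X → BwdR (.kpre a k X) (.base a k) (.pre a X)
  | pre {a : Lab} {k : Key} {X' X : Proc} {θ : ELab} : BwdR X' θ X → θ.key ≠ k →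
      BwdR (.kpre a k X') θ (.kpre a k X)
  | res {X' X : Proc} {θ : ELab} {a : ℕ} : BwdR X' θ X → θ.act ≠ .name a → θ.act ≠ .coname a →
      BwdR (X'.res a) θ (X.res a)
  | parL {X' X Y : Proc} {θ : ELab} : BwdR X' θ X → θ.key ∉ Y.keys →
      BwdR (X'.par Y) (.parL θ) (X.par Y)
  | parR {Y' Y X : Proc} {θ : ELab} : BwdR Y' θ Y → θ.key ∉ X.keys →
      BwdR (X.par Y') (.parR θ) (X.par Y)
  | syn {X' X Y' Y : Proc} {θ₁ θ₂ : ELab} : BwdR X' θ₁ X → BwdR Y' θ₂ Y →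
      θ₁.act ≠ .tau → θ₂.act = θ₁.act.co → θ₂.key = θ₁.key →
      BwdR (X'.par Y') (.syn (.parL θ₁) (.parR θ₂)) (X.par Y)
  | sumL {X' θ X Y} : BwdR X' θ X → Proc.std Y → BwdR (X'.sum Y) θ (X.sum Y)
  | sumR {Y' θ Y X} : BwdR Y' θ Y → Proc.std X → BwdR (X.sum Y') θ (X.sum Y)
  | repl1 {X' X : Proc} {θ : ELab} : BwdR X' θ X →
      BwdR ((Proc.repl X).par X') (.bang θ) (.repl X)
  | repl2 {X' X'' X : Proc} {θ₁ θ₂ : ELab} : BwdR X' θ₁ X → BwdR X'' θ₂ X →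
      θ₁.act ≠ .tau → θ₂.act = θ₁.act.co → θ₂.key = θ₁.key →
      BwdR ((Proc.repl X).par (X'.par X''))
        (.bang (.syn (.parL θ₁) (.parR θ₂))) (.repl X)

/-- Combined extended LTS. -/
def StepR : Bool → Proc → ELab → Proc → Prop
  | true => FwdR
  | false => BwdR

/-- Reachability in the extended calculus. -/
def ReachableR (X : Proc) : Prop :=
  ∃ X₀ : Proc, X₀.std ∧
    Relation.ReflTransGen (fun A B => ∃ d θ, StepR d A θ B) X₀ X

/-- Traces: sequences of composable (forward or backward) transitions. -/
inductive Trace : Proc → Proc → Type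
  | nil (X : Proc) : Trace X X
  | cons {X Y Z : Proc} (d : Bool) (θ : ELab) (s : Step d X θ Y)
      (T : Trace Y Z) : Trace X Z

/-- Composition of traces. -/
def Trace.comp : {X Y Z : Proc} → Trace X Y → Trace Y Z → Trace X Z
  | _, _, _, .nil _, U => U
  | _, _, _, .cons d θ s T, U => .cons d θ s (Trace.comp T U)

/-- Length of a trace. -/
def Trace.length : {X Y : Proc} → Trace X Y → ℕ
  | _, _, .nil _ => 0
  | _, _, .cons _ _ _ T => Trace.length T + 1

/-- All transitions of a trace have direction `d`. -/
def Trace.AllDir (d : Bool) : {X Y : Proc} → Trace X Y → Prop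
  | _, _, .nil _ => True
  | _, _, .cons d' _ _ T => d' = d ∧ Trace.AllDir d T

/-- Causal equivalence of traces: the least equivalence relation, closed under
composition, cancelling a transition followed by its reverse, and swapping the
two sides of a concurrency square. -/
inductive CEq : {X Y : Proc} → Trace X Y → Trace X Y → Prop
  | refl {X Y} (T : Trace X Y) : CEq T T
  | symm {X Y} {T T' : Trace X Y} : CEq T T' → CEq T' T
  | trans {X Y} {T T' T'' : Trace X Y} : CEq T T' → CEq T' T'' → CEq T T''
  | congr {X Y Z : Proc} {d θ} (s : Step d X θ Y) {T T' : Trace Y Z} :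
      CEq T T' → CEq (Trace.cons d θ s T) (Trace.cons d θ s T')
  | cancel {X Y Z : Proc} {d θ} (s : Step d X θ Y) (s' : Step (!d) Y θ X)
      (T : Trace X Z) :
      CEq (Trace.cons d θ s (Trace.cons (!d) θ s' T)) T
  | square {X X₁ X₂ Y Z : Proc} {d₁ d₂ θ₁ θ₂}
      (s₁ : Step d₁ X θ₁ X₁) (t₂ : Step d₂ X₁ θ₂ Y)
      (s₂ : Step d₂ X θ₂ X₂) (t₁ : Step d₁ X₂ θ₁ Y)
      (hc : Conc θ₁ θ₂) (T : Trace Y Z) :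
      CEq (Trace.cons d₁ θ₁ s₁ (Trace.cons d₂ θ₂ t₂ T))
          (Trace.cons d₂ θ₂ s₂ (Trace.cons d₁ θ₁ t₁ T))

/-- Removal of the keyed prefix α[k]. -/
def remP (a : Lab) (k : Key) : Proc → Proc
  | .nil => .nil
  | .pre b X => .pre b X
  | .kpre b m X => if b = a ∧ m = k then X else .kpre b m (remP a k X)
  | .par X Y => .par (remP a k X) (remP a k Y)
  | .sum X Y => .sum (remP a k X) (remP a k Y)
  | .res X n => .res (remP a k X) n
  | .repl X => .repl (remP a k X)

/-- rem_k^α : remove α[k] and its complement (only α[k] when α = τ). -/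
def remK (a : Lab) (k : Key) (X : Proc) : Proc :=
  if a = Lab.tau then remP a k X else remP a k (remP a.co k X)

/-- Left projection of enhanced keyed labels (partial). -/
def projL : ELab → Option ELab
  | .parL θ => some θ
  | .syn (.parL θL) _ => some θL
  | _ => none

/-- Right projection of enhanced keyed labels (partial). -/
def projR : ELab → Option ELab
  | .parR θ => some θ
  | .syn _ (.parR θR) => some θR
  | _ => none

/-- Projection selector: `true` is left, `false` is right. -/
def eproj : Bool → ELab → Option ELab
  | true => projL
  | false => projR

/-- Component selector for parallel processes. -/
def side (b : Bool) (L R : Proc) : Proc := if b then L else R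

/-- Labels of the shapes arising from a parallel composition. -/
def ParShape (θ : ELab) : Prop :=
  (∃ φ, θ = ELab.parL φ) ∨ (∃ φ, θ = ELab.parR φ) ∨
    ∃ φ ψ, θ = ELab.syn (ELab.parL φ) (ELab.parR ψ)

/-- The collapsing function σ identifying ! and |_R prefixes. -/
def collapse : ELab → ELab
  | .base a k => .base a k
  | .parL θ => .parL (collapse θ)
  | .parR θ => .parR (collapse θ)
  | .bang θ => .parR (collapse θ)
  | .syn θ₁ θ₂ => .syn (collapse θ₁) (collapse θ₂)

/-- Sub-term relation: strips sums, restrictions and executed keyed prefixes.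
`Strip X Y` means X is a sub-term of Y. -/
inductive Strip : Proc → Proc → Prop
  | refl (X : Proc) : Strip X X
  | sumL {X Y Z : Proc} : Strip X Y → Strip X (Y.sum Z)
  | sumR {X Y Z : Proc} : Strip X Y → Strip X (Z.sum Y)
  | res {X Y : Proc} {a : ℕ} : Strip X Y → Strip X (Y.res a)
  | kpre {X Y : Proc} {a : Lab} {k : Key} : Strip X Y → Strip X (.kpre a k Y)

/-- A forward transition of the proved LTS, as an object. -/
structure FTrans where
  src : Proc
  lab : ELab
  tgt : Proc
  ok : Fwd src lab tgt

/-- A backward transition of the proved LTS, as an object. -/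
structure BTrans where
  src : Proc
  lab : ELab
  tgt : Proc
  ok : Bwd src lab tgt

end CCSK

/-!
A forward step adds to the keyed prefixes of a process exactly those recorded in its label, and
these all carry the transition's key, which is fresh: a single `α[k]`, or a complementary pair
`λ[k], λ̄[k]` when the step is a synchronisation. A backward step removes the keyed prefixes of
its label. So "every key occurs at most twice, and twice only on complementary labels" holds of
standard processes and is preserved by every step.
-/

namespace CCSK

/-- The keyed prefixes `α[k]` that a transition labelled `θ` creates or removes. -/
def ELab.keyed : ELab → Multiset (Lab × Key)
  | .base a k => {(a, k)}
  | .parL θ => θ.keyed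
  | .parR θ => θ.keyed
  | .bang θ => θ.keyed
  | .syn θ₁ θ₂ => θ₁.keyed + θ₂.keyed

def KeysPaired (m : Multiset (Lab × Key)) : Prop :=
  ∀ k : Key,
    (m.filter (fun p => p.2 = k)).card ≤ 2 ∧
    ((m.filter (fun p => p.2 = k)).card = 2 →
      ∃ l : Lab, l ≠ Lab.tau ∧ m.filter (fun p => p.2 = k) = {(l, k), (l.co, k)})

theorem keysPaired_zero : KeysPaired 0 := by
  simp [KeysPaired]

theorem keysPaired_singleton (p : Lab × Key) : KeysPaired {p} := by
  intro k
  have : (({p} : Multiset (Lab × Key)).filter (fun q => q.2 = k)).card ≤ 1 := by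
    simpa using Multiset.card_le_card (Multiset.filter_le (fun q => q.2 = k) {p})
  omega

theorem keysPaired_pair {l : Lab} (hl : l ≠ Lab.tau) (k : Key) :
    KeysPaired {(l, k), (l.co, k)} := by
  intro j
  by_cases hkj : k = j
  · subst hkj
    rw [Multiset.filter_eq_self.mpr (by simp)]
    exact ⟨by simp, fun _ => ⟨l, hl, rfl⟩⟩
  · rw [Multiset.filter_eq_nil.mpr (by simp [hkj])]
    simp

theorem KeysPaired.of_add {m n : Multiset (Lab × Key)} (h : KeysPaired (m + n)) :
    KeysPaired m := by
  intro k
  obtain ⟨hcard, hpair⟩ := h k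
  rw [Multiset.filter_add, Multiset.card_add] at hcard hpair
  refine ⟨by omega, fun hm => ?_⟩
  have hn : n.filter (fun p => p.2 = k) = 0 := Multiset.card_eq_zero.mp (by omega)
  simpa [hn] using hpair (by omega)

theorem KeysPaired.add_of_disjoint {m n : Multiset (Lab × Key)} (hm : KeysPaired m)
    (hn : KeysPaired n) (hdisj : ∀ p ∈ m, ∀ q ∈ n, p.2 ≠ q.2) : KeysPaired (m + n) := by
  intro k
  rw [Multiset.filter_add]
  by_cases hk : ∃ p ∈ m, p.2 = k
  · obtain ⟨p, hp, rfl⟩ := hk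
    have : n.filter (fun q => q.2 = p.2) = 0 :=
      Multiset.filter_eq_nil.mpr fun q hq hqp => hdisj p hp q hq hqp.symm
    simpa [this] using hm p.2
  · have : m.filter (fun p => p.2 = k) = 0 :=
      Multiset.filter_eq_nil.mpr fun p hp hpk => hk ⟨p, hp, hpk⟩
    simpa [this] using hn k

theorem Proc.key_mem_keys_of_mem_keyed {X : Proc} {p : Lab × Key} (hp : p ∈ X.keyed) :
    p.2 ∈ X.keys := by
  induction X with
  | nil => simp [Proc.keyed] at hp
  | pre _ _ ih | res _ _ ih | repl _ ih => exact ih hp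
  | kpre a k X ih =>
    rcases Multiset.mem_cons.mp hp with rfl | hp
    · exact Set.mem_insert _ _
    · exact Set.mem_insert_of_mem _ (ih hp)
  | par X Y ihX ihY | sum X Y ihX ihY =>
    rcases Multiset.mem_add.mp hp with hp | hp
    · exact Or.inl (ihX hp)
    · exact Or.inr (ihY hp)

theorem Proc.keyed_eq_zero_of_std {X : Proc} (h : X.std) : X.keyed = 0 :=
  Multiset.eq_zero_of_forall_notMem fun _ hp => by
    simpa [show X.keys = ∅ from h] using Proc.key_mem_keys_of_mem_keyed hp

theorem Fwd.keyed_tgt {X X' : Proc} {θ : ELab} (h : Fwd X θ X') :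
    X'.keyed = X.keyed + θ.keyed := by
  induction h with
  | act hstd => simp [Proc.keyed, ELab.keyed, Proc.keyed_eq_zero_of_std hstd]
  | pre _ _ ih | res _ _ _ ih => simp [Proc.keyed, ih, Multiset.cons_add]
  | parL _ _ ih | parR _ _ ih | sumL _ _ ih | sumR _ _ ih =>
    simp [Proc.keyed, ELab.keyed, ih]; abel
  | syn _ _ _ _ _ ihX ihY => simp [Proc.keyed, ELab.keyed, ihX, ihY]; abel

theorem Bwd.keyed_src {X' X : Proc} {θ : ELab} (h : Bwd X' θ X) :
    X'.keyed = X.keyed + θ.keyed := by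
  induction h with
  | act hstd => simp [Proc.keyed, ELab.keyed, Proc.keyed_eq_zero_of_std hstd]
  | pre _ _ ih | res _ _ _ ih => simp [Proc.keyed, ih, Multiset.cons_add]
  | parL _ _ ih | parR _ _ ih | sumL _ _ ih | sumR _ _ ih =>
    simp [Proc.keyed, ELab.keyed, ih]; abel
  | syn _ _ _ _ _ ihX ihY => simp [Proc.keyed, ELab.keyed, ihX, ihY]; abel

theorem Fwd.key_notMem_keys {X X' : Proc} {θ : ELab} (h : Fwd X θ X') : θ.key ∉ X.keys := by
  induction h with
  | act hstd => simp [Proc.keys, show _ = ∅ from hstd]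
  | pre _ hk ih => exact fun h => (Set.mem_insert_iff.mp h).elim hk ih
  | res _ _ _ ih => exact ih
  | parL _ hY ih => exact fun h => h.elim ih hY
  | parR _ hX ih => exact fun h => h.elim hX ih
  | syn _ _ _ _ hk ihX ihY => exact fun h => h.elim ihX fun hY => ihY (hk ▸ hY)
  | sumL _ hstd ih | sumR _ hstd ih => simpa [Proc.keys, show _ = ∅ from hstd] using ih

theorem Lab.co_ne_tau {l : Lab} (h : l ≠ Lab.tau) : l.co ≠ Lab.tau := by
  cases l <;> simp [Lab.co] at *

theorem Fwd.keyed_label {X X' : Proc} {θ : ELab} (h : Fwd X θ X') :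
    θ.keyed = {(θ.act, θ.key)} ∨
      θ.act = Lab.tau ∧ ∃ l, l ≠ Lab.tau ∧ θ.keyed = {(l, θ.key), (l.co, θ.key)} := by
  induction h with
  | act _ => exact Or.inl rfl
  | pre _ _ ih | res _ _ _ ih | parL _ _ ih | parR _ _ ih | sumL _ _ ih | sumR _ _ ih => exact ih
  | @syn _ _ _ _ θ₁ θ₂ _ _ hτ hco hk ih₁ ih₂ =>
    -- a visible action is a single keyed prefix, since synchronisations are silent
    obtain h₁ := ih₁.resolve_right fun h => hτ h.1
    obtain h₂ := ih₂.resolve_right fun h => Lab.co_ne_tau hτ (hco ▸ h.1)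
    refine Or.inr ⟨rfl, θ₁.act, hτ, ?_⟩
    simp only [ELab.keyed, ELab.key, h₁, h₂, hco, hk]
    rfl

theorem Fwd.keysPaired_label {X X' : Proc} {θ : ELab} (h : Fwd X θ X') :
    KeysPaired θ.keyed ∧ ∀ p ∈ θ.keyed, p.2 = θ.key := by
  rcases h.keyed_label with hθ | ⟨-, l, hl, hθ⟩ <;> rw [hθ]
  · exact ⟨keysPaired_singleton _, by simp⟩
  · exact ⟨keysPaired_pair hl _, by simp⟩

theorem Fwd.keysPaired {X X' : Proc} {θ : ELab} (h : Fwd X θ X') (hX : KeysPaired X.keyed) :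
    KeysPaired X'.keyed := by
  obtain ⟨hθ, hkey⟩ := h.keysPaired_label
  rw [h.keyed_tgt]
  refine hX.add_of_disjoint hθ fun p hp q hq hpq => h.key_notMem_keys ?_
  rw [← hkey q hq, ← hpq]
  exact Proc.key_mem_keys_of_mem_keyed hp

theorem Bwd.keysPaired {X' X : Proc} {θ : ELab} (h : Bwd X' θ X) (hX' : KeysPaired X'.keyed) :
    KeysPaired X.keyed :=
  (h.keyed_src ▸ hX').of_add

theorem Reachable.keysPaired {X : Proc} (h : Reachable X) : KeysPaired X.keyed := by
  obtain ⟨X₀, hstd, hpath⟩ := h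
  induction hpath with
  | refl => exact Proc.keyed_eq_zero_of_std hstd ▸ keysPaired_zero
  | tail _ hstep ih =>
    obtain ⟨d, θ, hs⟩ := hstep
    cases d
    · exact Bwd.keysPaired hs ih
    · exact Fwd.keysPaired hs ih

end CCSK

open CCSK in
/-- In a reachable CCSK process every key occurs at most twice, and a key
occurring twice is attached to complementary labels λ[k] and λ̄[k]. -/
theorem keys_at_most_twice_complementary : ∀ X : Proc, Reachable X →
    ∀ k : Key,
      (Multiset.filter (fun p => p.2 = k) X.keyed).card ≤ 2 ∧
      ((Multiset.filter (fun p => p.2 = k) X.keyed).card = 2 →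
        ∃ l : Lab, l ≠ Lab.tau ∧
          Multiset.filter (fun p => p.2 = k) X.keyed = {(l, k), (l.co, k)}) :=
  fun _ hX => hX.keysPaired
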